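/- With R, c1, x1, x2 and the functions NA1, NPA2, NPA3, NPD4 as in the context, one has NPD4(0,0,0,0) = 3·(15c1^2 + 20c1x1 + 5x1^2 + 5x2). (This is the formula of Theorem 1.3 for N(D4): the number of curves in the linear system of a sufficiently 3-ample line bundle L on a compact complex surface X that pass through δ_L − 3 generic points and have a D4-singularity (triple point), where c1 = c1(L), x1 = c1(T*X), x2 = c2(T*X), and N(D4) = NPD4(0,0,0,0)/3 = 15c1^2 + 20c1x1 + 5x1^2 + 5x2.) -/

import Mathlib

/-! After unfolding the recursions, `NPD4(n1,m1,m2,0)` is an explicit integer combination of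
twelve values of `NA1`. Giving `m2` weight 2 (it counts powers of the degree-4 class `x2`), `NA1`
is supported on the triples of weight at most 2, i.e. on classes of degree at most the real
dimension 4; at the origin only seven of the twelve terms survive, and substituting them gives
the formula. -/

section Recursions

variable {R : Type*} [CommRing R] (NA1 : ℕ → ℕ → ℕ → R)
  (NPA2 NPA3 NPD4 : ℕ → ℕ → ℕ → ℕ → R)

theorem npd4_zero_eq_npa2
    (hNPA2_rec : ∀ n1 m1 m2 θ : ℕ, NPA2 n1 m1 m2 (θ+2) =
      NPA2 n1 (m1+1) m2 (θ+1) - NPA2 n1 m1 (m2+1) θ)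
    (hNPA3 : ∀ n1 m1 m2 θ : ℕ, NPA3 n1 m1 m2 θ =
      3*NPA2 n1 m1 m2 (θ+1) + NPA2 n1 m1 m2 θ + NPA2 (n1+1) m1 m2 θ)
    (hNPD4 : ∀ n1 m1 m2 θ : ℕ, NPD4 n1 m1 m2 θ =
      2*NPA3 n1 (m1+1) m2 θ - 2*NPA3 n1 m1 m2 (θ+1)
      + NPA3 n1 m1 m2 θ + NPA3 (n1+1) m1 m2 θ)
    (n1 m1 m2 : ℕ) :
    NPD4 n1 m1 m2 0 =
      NPA2 n1 m1 m2 0 + 2 * NPA2 (n1+1) m1 m2 0 + NPA2 (n1+2) m1 m2 0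
      + 2 * NPA2 n1 (m1+1) m2 0 + 2 * NPA2 (n1+1) (m1+1) m2 0 + 6 * NPA2 n1 m1 (m2+1) 0
      + NPA2 n1 m1 m2 1 + NPA2 (n1+1) m1 m2 1 := by
  rw [hNPD4]
  simp only [hNPA3, zero_add, Nat.reduceAdd, Nat.add_assoc]
  rw [hNPA2_rec n1 m1 m2 0]
  ring

theorem npd4_zero_eq_na1
    (hNPA2_0 : ∀ n1 m1 m2 : ℕ, NPA2 n1 m1 m2 0 =
      2*NA1 n1 m1 m2 + 2*NA1 n1 (m1+1) m2 + 2*NA1 (n1+1) m1 m2)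
    (hNPA2_1 : ∀ n1 m1 m2 : ℕ, NPA2 n1 m1 m2 1 =
      NA1 n1 m1 m2 + 2*NA1 (n1+1) m1 m2 + NA1 (n1+2) m1 m2
      + 3*NA1 n1 (m1+1) m2 + 3*NA1 (n1+1) (m1+1) m2 + 2*NA1 n1 (m1+2) m2)
    (hNPA2_rec : ∀ n1 m1 m2 θ : ℕ, NPA2 n1 m1 m2 (θ+2) =
      NPA2 n1 (m1+1) m2 (θ+1) - NPA2 n1 m1 (m2+1) θ)
    (hNPA3 : ∀ n1 m1 m2 θ : ℕ, NPA3 n1 m1 m2 θ =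
      3*NPA2 n1 m1 m2 (θ+1) + NPA2 n1 m1 m2 θ + NPA2 (n1+1) m1 m2 θ)
    (hNPD4 : ∀ n1 m1 m2 θ : ℕ, NPD4 n1 m1 m2 θ =
      2*NPA3 n1 (m1+1) m2 θ - 2*NPA3 n1 m1 m2 (θ+1)
      + NPA3 n1 m1 m2 θ + NPA3 (n1+1) m1 m2 θ)
    (n1 m1 m2 : ℕ) :
    NPD4 n1 m1 m2 0 =
      3 * NA1 n1 m1 m2 + 9 * NA1 (n1+1) m1 m2 + 9 * NA1 (n1+2) m1 m2 + 3 * NA1 (n1+3) m1 m2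
      + 9 * NA1 n1 (m1+1) m2 + 18 * NA1 (n1+1) (m1+1) m2 + 9 * NA1 (n1+2) (m1+1) m2
      + 6 * NA1 n1 (m1+2) m2 + 6 * NA1 (n1+1) (m1+2) m2
      + 12 * NA1 n1 m1 (m2+1) + 12 * NA1 (n1+1) m1 (m2+1) + 12 * NA1 n1 (m1+1) (m2+1) := by
  rw [npd4_zero_eq_npa2 NPA2 NPA3 NPD4 hNPA2_rec hNPA3 hNPD4]
  simp only [hNPA2_0, hNPA2_1, Nat.add_assoc, Nat.reduceAdd]
  ring

end Recursions

theorem na1_eq_zero_of_two_lt_weight {R : Type*} [Zero R] (NA1 : ℕ → ℕ → ℕ → R)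
    (hNA1_other : ∀ n1 m1 m2 : ℕ,
      (n1, m1, m2) ∉ ({(0,0,0), (1,0,0), (2,0,0), (0,1,0), (1,1,0), (0,2,0), (0,0,1)} :
        Set (ℕ × ℕ × ℕ)) → NA1 n1 m1 m2 = 0)
    {n1 m1 m2 : ℕ} (hweight : 2 < n1 + m1 + 2 * m2) :
    NA1 n1 m1 m2 = 0 :=
  hNA1_other n1 m1 m2 <| by
    simp only [Set.mem_insert_iff, Set.mem_singleton_iff, Prod.ext_iff]
    omega

theorem stmt_6_general {R : Type*} [CommRing R] (c1 x1 x2 : R)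
    (NA1 : ℕ → ℕ → ℕ → R)
    (hNA1_000 : NA1 0 0 0 = 3*c1^2 + 2*c1*x1 + x2)
    (hNA1_100 : NA1 1 0 0 = 3*c1^2 + c1*x1)
    (hNA1_200 : NA1 2 0 0 = c1^2)
    (hNA1_010 : NA1 0 1 0 = 3*c1*x1 + x1^2)
    (hNA1_110 : NA1 1 1 0 = c1*x1)
    (hNA1_020 : NA1 0 2 0 = x1^2)
    (hNA1_001 : NA1 0 0 1 = x2)
    (hNA1_other : ∀ n1 m1 m2 : ℕ,
      (n1, m1, m2) ∉ ({(0,0,0), (1,0,0), (2,0,0), (0,1,0), (1,1,0), (0,2,0), (0,0,1)} :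
        Set (ℕ × ℕ × ℕ)) → NA1 n1 m1 m2 = 0)
    (NPA2 : ℕ → ℕ → ℕ → ℕ → R)
    (hNPA2_0 : ∀ n1 m1 m2 : ℕ, NPA2 n1 m1 m2 0 =
      2*NA1 n1 m1 m2 + 2*NA1 n1 (m1+1) m2 + 2*NA1 (n1+1) m1 m2)
    (hNPA2_1 : ∀ n1 m1 m2 : ℕ, NPA2 n1 m1 m2 1 =
      NA1 n1 m1 m2 + 2*NA1 (n1+1) m1 m2 + NA1 (n1+2) m1 m2
      + 3*NA1 n1 (m1+1) m2 + 3*NA1 (n1+1) (m1+1) m2 + 2*NA1 n1 (m1+2) m2)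
    (hNPA2_rec : ∀ n1 m1 m2 θ : ℕ, NPA2 n1 m1 m2 (θ+2) =
      NPA2 n1 (m1+1) m2 (θ+1) - NPA2 n1 m1 (m2+1) θ)
    (NPA3 : ℕ → ℕ → ℕ → ℕ → R)
    (hNPA3 : ∀ n1 m1 m2 θ : ℕ, NPA3 n1 m1 m2 θ =
      3*NPA2 n1 m1 m2 (θ+1) + NPA2 n1 m1 m2 θ + NPA2 (n1+1) m1 m2 θ)
    (NPD4 : ℕ → ℕ → ℕ → ℕ → R)
    (hNPD4 : ∀ n1 m1 m2 θ : ℕ, NPD4 n1 m1 m2 θ =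
      2*NPA3 n1 (m1+1) m2 θ - 2*NPA3 n1 m1 m2 (θ+1)
      + NPA3 n1 m1 m2 θ + NPA3 (n1+1) m1 m2 θ)
    : NPD4 0 0 0 0 = 3*(15*c1^2 + 20*c1*x1 + 5*x1^2 + 5*x2) := by
  rw [npd4_zero_eq_na1 NA1 NPA2 NPA3 NPD4 hNPA2_0 hNPA2_1 hNPA2_rec hNPA3 hNPD4]
  simp (disch := norm_num) only [zero_add, hNA1_000, hNA1_100, hNA1_200, hNA1_010, hNA1_110,
    hNA1_020, hNA1_001, na1_eq_zero_of_two_lt_weight NA1 hNA1_other]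
  ring

theorem stmt_6 {R : Type*} [CommRing R] [Algebra ℚ R] (c1 x1 x2 : R)
    (NA1 : ℕ → ℕ → ℕ → R)
    (hNA1_000 : NA1 0 0 0 = 3*c1^2 + 2*c1*x1 + x2)
    (hNA1_100 : NA1 1 0 0 = 3*c1^2 + c1*x1)
    (hNA1_200 : NA1 2 0 0 = c1^2)
    (hNA1_010 : NA1 0 1 0 = 3*c1*x1 + x1^2)
    (hNA1_110 : NA1 1 1 0 = c1*x1)
    (hNA1_020 : NA1 0 2 0 = x1^2)
    (hNA1_001 : NA1 0 0 1 = x2)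
    (hNA1_other : ∀ n1 m1 m2 : ℕ,
      (n1, m1, m2) ∉ ({(0,0,0), (1,0,0), (2,0,0), (0,1,0), (1,1,0), (0,2,0), (0,0,1)} :
        Set (ℕ × ℕ × ℕ)) → NA1 n1 m1 m2 = 0)
    (NPA2 : ℕ → ℕ → ℕ → ℕ → R)
    (hNPA2_0 : ∀ n1 m1 m2 : ℕ, NPA2 n1 m1 m2 0 =
      2*NA1 n1 m1 m2 + 2*NA1 n1 (m1+1) m2 + 2*NA1 (n1+1) m1 m2)
    (hNPA2_1 : ∀ n1 m1 m2 : ℕ, NPA2 n1 m1 m2 1 =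
      NA1 n1 m1 m2 + 2*NA1 (n1+1) m1 m2 + NA1 (n1+2) m1 m2
      + 3*NA1 n1 (m1+1) m2 + 3*NA1 (n1+1) (m1+1) m2 + 2*NA1 n1 (m1+2) m2)
    (hNPA2_rec : ∀ n1 m1 m2 θ : ℕ, NPA2 n1 m1 m2 (θ+2) =
      NPA2 n1 (m1+1) m2 (θ+1) - NPA2 n1 m1 (m2+1) θ)
    (NPA3 : ℕ → ℕ → ℕ → ℕ → R)
    (hNPA3 : ∀ n1 m1 m2 θ : ℕ, NPA3 n1 m1 m2 θ =
      3*NPA2 n1 m1 m2 (θ+1) + NPA2 n1 m1 m2 θ + NPA2 (n1+1) m1 m2 θ)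
    (NPD4 : ℕ → ℕ → ℕ → ℕ → R)
    (hNPD4 : ∀ n1 m1 m2 θ : ℕ, NPD4 n1 m1 m2 θ =
      2*NPA3 n1 (m1+1) m2 θ - 2*NPA3 n1 m1 m2 (θ+1)
      + NPA3 n1 m1 m2 θ + NPA3 (n1+1) m1 m2 θ)
    : NPD4 0 0 0 0 = 3*(15*c1^2 + 20*c1*x1 + 5*x1^2 + 5*x2) :=
  stmt_6_general c1 x1 x2 NA1 hNA1_000 hNA1_100 hNA1_200 hNA1_010 hNA1_110 hNA1_020 hNA1_001
    hNA1_other NPA2 hNPA2_0 hNPA2_1 hNPA2_rec NPA3 hNPA3 NPD4 hNPD4
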